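/- arXiv:2412.17810 — 5 statements merged into one kernel-verified Lean document; each statement's English description precedes it below -/
import Mathlib

section
/- Let f : [0,∞) → ℝ be non-decreasing, concave with f(0) = 0, and define F(M) = ∑_{i=1}^d f(λ_i(M)) for M positive semidefinite of size d×d, where λ_i(M) are the eigenvalues of M. Then for every d×d positive semidefinite matrix M and every d×d orthogonal matrix Q, F(M) ≤ ∑_{i=1}^d f((Qᵀ M Q)_{ii}). -/
/-!
Diagonalize `M = U diag(λ) Uᵀ`. With the orthogonal matrix `V = Qᵀ U`, the diagonal of `Qᵀ M Q`
is `P λ`, where `P = V ⊙ V` is doubly stochastic because the rows and columns of `V` are unit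
vectors. Jensen's inequality along each row of `P` gives `∑ⱼ Pᵢⱼ f(λⱼ) ≤ f((Pλ)ᵢ)`, and summing
over `i`, the column sums `∑ᵢ Pᵢⱼ = 1` turn the left side into `∑ⱼ f(λⱼ)`.
-/

open Matrix BigOperators

namespace Matrix

variable {n : Type*} [Fintype n] [DecidableEq n]

theorem _root_.ConcaveOn.sum_le_sum_mulVec_of_mem_doublyStochastic {𝕜 β : Type*} [Field 𝕜]
    [LinearOrder 𝕜] [IsStrictOrderedRing 𝕜] [AddCommGroup β] [PartialOrder β]
    [IsOrderedAddMonoid β] [Module 𝕜 β] [IsStrictOrderedModule 𝕜 β] {s : Set 𝕜} {f : 𝕜 → β}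
    (hf : ConcaveOn 𝕜 s f) {P : Matrix n n 𝕜} (hP : P ∈ doublyStochastic 𝕜 n) {x : n → 𝕜}
    (hx : ∀ j, x j ∈ s) :
    ∑ j, f (x j) ≤ ∑ i, f ((P *ᵥ x) i) :=
  calc ∑ j, f (x j)
      = ∑ j, (∑ i, P i j) • f (x j) := by simp [sum_col_of_mem_doublyStochastic hP]
    _ = ∑ i, ∑ j, P i j • f (x j) := by simp only [Finset.sum_smul]; exact Finset.sum_comm
    _ ≤ ∑ i, f (∑ j, P i j • x j) := Finset.sum_le_sum fun i _ =>
        hf.le_map_sum (fun j _ => nonneg_of_mem_doublyStochastic hP)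
          (sum_row_of_mem_doublyStochastic hP i) fun j _ => hx j
    _ = ∑ i, f ((P *ᵥ x) i) := by simp [mulVec, dotProduct]

theorem hadamard_self_mem_doublyStochastic {R : Type*} [CommRing R] [LinearOrder R]
    [IsStrictOrderedRing R] {V : Matrix n n R} (hV : Vᵀ * V = 1) :
    V ⊙ V ∈ doublyStochastic R n := by
  have hV' : V * Vᵀ = 1 := mul_eq_one_comm.mp hV
  refine mem_doublyStochastic_iff_sum.mpr ⟨fun i j => mul_self_nonneg _, fun i => ?_, fun j => ?_⟩
  · simpa [mul_apply] using congrFun (congrFun hV' i) i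
  · simpa [mul_apply] using congrFun (congrFun hV j) j

theorem diag_mul_diagonal_mul_transpose {R : Type*} [CommSemiring R] (V : Matrix n n R)
    (x : n → R) : diag (V * diagonal x * Vᵀ) = (V ⊙ V) *ᵥ x := by
  ext i
  simp only [diag_apply, mul_apply, transpose_apply, mulVec, dotProduct, hadamard_apply,
    diagonal_apply, mul_ite, mul_zero, Finset.sum_ite_eq', Finset.mem_univ, if_true]
  exact Finset.sum_congr rfl fun j _ => by ring

theorem IsHermitian.eq_mul_diagonal_mul_transpose {A : Matrix n n ℝ} (hA : A.IsHermitian) :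
    A = (hA.eigenvectorUnitary : Matrix n n ℝ) * diagonal hA.eigenvalues *
      (hA.eigenvectorUnitary : Matrix n n ℝ)ᵀ := by
  simpa [star_eq_conjTranspose] using hA.spectral_theorem

theorem IsHermitian.transpose_eigenvectorUnitary_mul_self {A : Matrix n n ℝ}
    (hA : A.IsHermitian) :
    (hA.eigenvectorUnitary : Matrix n n ℝ)ᵀ * hA.eigenvectorUnitary = 1 :=
  mem_unitaryGroup_iff'.mp hA.eigenvectorUnitary.2

end Matrix

theorem stmt0_general {d : ℕ} (f : ℝ → ℝ)
    (hconc : ConcaveOn ℝ (Set.Ici 0) f)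
    (M : Matrix (Fin d) (Fin d) ℝ) (hM : M.PosSemidef)
    (Q : Matrix (Fin d) (Fin d) ℝ) (hQ : Qᵀ * Q = 1) :
    ∑ i, f (hM.1.eigenvalues i) ≤ ∑ i, f ((Qᵀ * M * Q) i i) := by
  set U : Matrix (Fin d) (Fin d) ℝ := (hM.1.eigenvectorUnitary : Matrix (Fin d) (Fin d) ℝ)
  set V := Qᵀ * U
  have hV : Vᵀ * V = 1 := calc
    Vᵀ * V = Uᵀ * (Q * Qᵀ) * U := by simp only [V, transpose_mul, transpose_transpose, mul_assoc]
    _ = 1 := by rw [mul_eq_one_comm.mp hQ, mul_one, hM.1.transpose_eigenvectorUnitary_mul_self]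
  have hdiag : diag (Qᵀ * M * Q) = (V ⊙ V) *ᵥ hM.1.eigenvalues := by
    conv_lhs => rw [hM.1.eq_mul_diagonal_mul_transpose]
    rw [← diag_mul_diagonal_mul_transpose]
    simp only [V, transpose_mul, transpose_transpose, mul_assoc]
    rfl
  have := hconc.sum_le_sum_mulVec_of_mem_doublyStochastic
    (hadamard_self_mem_doublyStochastic hV) hM.eigenvalues_nonneg
  rwa [← hdiag] at this

theorem stmt0 {d : ℕ} (f : ℝ → ℝ)
    (hmono : MonotoneOn f (Set.Ici 0)) (hconc : ConcaveOn ℝ (Set.Ici 0) f)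
    (hf0 : f 0 = 0)
    (M : Matrix (Fin d) (Fin d) ℝ) (hM : M.PosSemidef)
    (Q : Matrix (Fin d) (Fin d) ℝ) (hQ : Qᵀ * Q = 1) :
    ∑ i, f (hM.1.eigenvalues i) ≤ ∑ i, f ((Qᵀ * M * Q) i i) :=
  stmt0_general f hconc M hM Q hQ
end

section
/- Let f : [0,∞) → ℝ be non-decreasing, strictly concave with f(0) = 0, and F(M) = ∑_{i=1}^d f(λ_i(M)). For a positive semidefinite d×d matrix M and orthogonal Q ∈ O(d), the equality F(M) = ∑_{i=1}^d f((Qᵀ M Q)_{ii}) holds if and only if Qᵀ M Q is diagonal. -/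
open Matrix BigOperators

private lemma jensenA {n : ℕ} (f : ℝ → ℝ) (hconc : ConcaveOn ℝ (Set.Ici 0) f)
    (w p : Fin n → ℝ) (hw : ∀ i, 0 ≤ w i) (h1 : ∑ i, w i = 1) (hp : ∀ i, 0 ≤ p i) :
    ∑ i, w i * f (p i) ≤ f (∑ i, w i * p i) := by
  simpa [smul_eq_mul] using hconc.le_map_sum (fun i _ => hw i) h1 (fun i _ => hp i)

private lemma jensenB {n : ℕ} (f : ℝ → ℝ) (hconc : StrictConcaveOn ℝ (Set.Ici 0) f)
    (w p : Fin n → ℝ) (hw : ∀ i, 0 ≤ w i) (h1 : ∑ i, w i = 1) (hp : ∀ i, 0 ≤ p i)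
    (heq : f (∑ i, w i * p i) ≤ ∑ i, w i * f (p i)) :
    ∀ j k, w j ≠ 0 → w k ≠ 0 → p j = p k := by
  classical
  set t : Finset (Fin n) := Finset.univ.filter (fun i => w i ≠ 0) with ht
  have hmemt : ∀ i, i ∈ t ↔ w i ≠ 0 := by
    intro i; simp [ht]
  have hsub : t ⊆ Finset.univ := Finset.subset_univ t
  have hzero : ∀ i ∈ Finset.univ, i ∉ t → w i = 0 := by
    intro i _ hi; by_contra h; exact hi ((hmemt i).2 h)
  have e1 : ∑ i ∈ t, w i = 1 := by
    rw [← h1]; exact (Finset.sum_subset hsub (fun i h1' h2' => hzero i h1' h2')).symm ▸ rfl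
  have e1' : (∑ i ∈ t, w i) = ∑ i, w i := by
    apply Finset.sum_subset hsub; intro i h1' h2'; exact hzero i h1' h2'
  have e2 : (∑ i ∈ t, w i * p i) = ∑ i, w i * p i := by
    apply Finset.sum_subset hsub; intro i h1' h2'; rw [hzero i h1' h2', zero_mul]
  have e3 : (∑ i ∈ t, w i * f (p i)) = ∑ i, w i * f (p i) := by
    apply Finset.sum_subset hsub; intro i h1' h2'; rw [hzero i h1' h2', zero_mul]
  have h₀ : ∀ i ∈ t, 0 < w i := by
    intro i hi; exact lt_of_le_of_ne (hw i) (Ne.symm ((hmemt i).1 hi))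
  have key : ∀ ⦃j⦄, j ∈ t → ∀ ⦃k⦄, k ∈ t → p j = p k := by
    apply hconc.eq_of_map_sum_eq h₀ (e1' ▸ h1) (fun i _ => hp i)
    simpa [smul_eq_mul, e2, e3] using heq
  intro j k hj hk
  exact key ((hmemt j).2 hj) ((hmemt k).2 hk)

theorem stmt2 {d : ℕ} (f : ℝ → ℝ)
    (hmono : MonotoneOn f (Set.Ici 0)) (hconc : StrictConcaveOn ℝ (Set.Ici 0) f)
    (hf0 : f 0 = 0)
    (M : Matrix (Fin d) (Fin d) ℝ) (hM : M.PosSemidef)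
    (Q : Matrix (Fin d) (Fin d) ℝ) (hQ : Qᵀ * Q = 1) :
    (∑ i, f (hM.1.eigenvalues i) = ∑ i, f ((Qᵀ * M * Q) i i)) ↔ (Qᵀ * M * Q).IsDiag := by
  classical
  set lam := hM.1.eigenvalues with hlam
  set U : Matrix (Fin d) (Fin d) ℝ := (Matrix.IsHermitian.eigenvectorUnitary hM.1 : Matrix (Fin d) (Fin d) ℝ) with hUdef
  set V : Matrix (Fin d) (Fin d) ℝ := Uᵀ * Q with hVdef
  set N : Matrix (Fin d) (Fin d) ℝ := Qᵀ * M * Q with hNdef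
  have hlnn : ∀ j, 0 ≤ lam j := fun j => hM.eigenvalues_nonneg j
  -- unitarity of U
  have hUtU : Uᵀ * U = 1 := by
    have := (Matrix.IsHermitian.eigenvectorUnitary hM.1).2
    rw [Matrix.mem_unitaryGroup_iff'] at this
    simpa [hUdef, Matrix.star_eq_conjTranspose, Matrix.conjTranspose_eq_transpose_of_trivial] using this
  have hUUt : U * Uᵀ = 1 := mul_eq_one_comm.mp hUtU
  have hVtV : Vᵀ * V = 1 := by
    rw [hVdef, Matrix.transpose_mul, Matrix.transpose_transpose]
    calc Qᵀ * U * (Uᵀ * Q) = Qᵀ * (U * Uᵀ) * Q := by noncomm_ring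
      _ = 1 := by rw [hUUt, mul_one, hQ]
  have hVVt : V * Vᵀ = 1 := mul_eq_one_comm.mp hVtV
  have colsum : ∀ i, ∑ j, (V j i) ^ 2 = 1 := by
    intro i
    have := congrFun (congrFun hVtV i) i
    simpa [Matrix.mul_apply, Matrix.one_apply, sq] using this
  have rowsum : ∀ j, ∑ i, (V j i) ^ 2 = 1 := by
    intro j
    have := congrFun (congrFun hVVt j) j
    simpa [Matrix.mul_apply, Matrix.one_apply, sq] using this
  -- spectral theorem
  have hspec : M = U * Matrix.diagonal lam * Uᵀ := by
    have h := Matrix.IsHermitian.spectral_theorem hM.1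
    have h2 : (RCLike.ofReal ∘ hM.1.eigenvalues : Fin d → ℝ) = lam := by
      funext j; simp [hlam]
    rw [h2] at h
    simpa [hUdef, Matrix.star_eq_conjTranspose, Matrix.conjTranspose_eq_transpose_of_trivial] using h
  have hN : N = Vᵀ * Matrix.diagonal lam * V := by
    rw [hNdef, hspec, hVdef, Matrix.transpose_mul, Matrix.transpose_transpose]
    noncomm_ring
  have entry : ∀ k i, N k i = ∑ j, V j k * lam j * V j i := by
    intro k i
    rw [hN]
    simp only [Matrix.mul_apply, Matrix.transpose_apply]
    apply Finset.sum_congr rfl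
    intro x _
    have hinner : (∑ y, V y k * Matrix.diagonal lam y x) = V x k * lam x := by
      rw [Finset.sum_eq_single x]
      · simp
      · intro b _ hb; rw [Matrix.diagonal_apply_ne _ hb, mul_zero]
      · intro h; exact absurd (Finset.mem_univ x) h
    rw [hinner]
  have diagentry : ∀ i, N i i = ∑ j, (V j i) ^ 2 * lam j := by
    intro i; rw [entry i i]; apply Finset.sum_congr rfl; intro j _; ring
  have hNnn : ∀ i, 0 ≤ N i i := by
    intro i; rw [diagentry i]
    exact Finset.sum_nonneg fun j _ => mul_nonneg (sq_nonneg _) (hlnn j)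
  -- per-column Jensen
  have gap : ∀ i, ∑ j, (V j i) ^ 2 * f (lam j) ≤ f (N i i) := by
    intro i
    rw [diagentry i]
    exact jensenA f hconc.concaveOn (fun j => (V j i) ^ 2) lam
      (fun j => sq_nonneg _) (colsum i) hlnn
  have doublesum : ∑ i, ∑ j, (V j i) ^ 2 * f (lam j) = ∑ j, f (lam j) := by
    rw [Finset.sum_comm]
    apply Finset.sum_congr rfl
    intro j _
    rw [← Finset.sum_mul, rowsum j, one_mul]
  have hineq : ∑ j, f (lam j) ≤ ∑ i, f (N i i) := by
    rw [← doublesum]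
    exact Finset.sum_le_sum fun i _ => gap i
  constructor
  · -- equality → diagonal
    intro heq
    have hsumeq : ∑ i, (f (N i i) - ∑ j, (V j i) ^ 2 * f (lam j)) = 0 := by
      rw [Finset.sum_sub_distrib, doublesum, ← heq, sub_self]
    have hgap0 : ∀ i, f (N i i) = ∑ j, (V j i) ^ 2 * f (lam j) := by
      intro i
      have := (Finset.sum_eq_zero_iff_of_nonneg
        (fun i _ => sub_nonneg.mpr (gap i))).mp hsumeq i (Finset.mem_univ i)
      linarith [sub_eq_zero.mp this]
    have hconst : ∀ i j k, V j i ≠ 0 → V k i ≠ 0 → lam j = lam k := by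
      intro i j k hj hk
      refine jensenB f hconc (fun j => (V j i) ^ 2) lam (fun j => sq_nonneg _)
        (colsum i) hlnn ?_ j k (pow_ne_zero 2 hj) (pow_ne_zero 2 hk)
      rw [← diagentry i]; exact le_of_eq (hgap0 i)
    have keyeig : ∀ i j, lam j * V j i = N i i * V j i := by
      intro i j
      by_cases hj : V j i = 0
      · rw [hj, mul_zero, mul_zero]
      · have hNval : N i i = lam j := by
          rw [diagentry i]
          have : ∀ k, (V k i) ^ 2 * lam k = (V k i) ^ 2 * lam j := by
            intro k
            by_cases hk : V k i = 0
            · rw [hk]; ring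
            · rw [hconst i k j hk hj]
          rw [Finset.sum_congr rfl (fun k _ => this k), ← Finset.sum_mul, colsum i, one_mul]
        rw [hNval]
    intro k i hki
    rw [entry k i]
    have : ∀ j, V j k * lam j * V j i = N i i * (V j k * V j i) := by
      intro j
      have := keyeig i j
      calc V j k * lam j * V j i = V j k * (lam j * V j i) := by ring
        _ = V j k * (N i i * V j i) := by rw [this]
        _ = N i i * (V j k * V j i) := by ring
    rw [Finset.sum_congr rfl (fun j _ => this j), ← Finset.mul_sum]
    have : ∑ j, V j k * V j i = 0 := by
      have h := congrFun (congrFun hVtV k) i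
      simpa [Matrix.mul_apply, Matrix.one_apply, hki] using h
    rw [this, mul_zero]
  · -- diagonal → equality
    intro hdiag
    refine le_antisymm hineq ?_
    -- D = V * N * Vᵀ, so lam j = ∑ a (V j a)^2 * N a a
    have hD : Matrix.diagonal lam = V * N * Vᵀ := by
      rw [hN]
      calc Matrix.diagonal lam
          = (V * Vᵀ) * Matrix.diagonal lam * (V * Vᵀ) := by rw [hVVt]; noncomm_ring
        _ = V * (Vᵀ * Matrix.diagonal lam * V) * Vᵀ := by noncomm_ring
    have lamentry : ∀ j, lam j = ∑ a, (V j a) ^ 2 * N a a := by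
      intro j
      have h := congrFun (congrFun hD j) j
      have hdd : Matrix.diagonal lam j j = lam j := by simp
      rw [hdd] at h
      rw [h]
      simp only [Matrix.mul_apply, Matrix.transpose_apply]
      apply Finset.sum_congr rfl
      intro a _
      have hinner : (∑ b, V j b * N b a) = V j a * N a a := by
        rw [Finset.sum_eq_single a]
        · intro b _ hb; rw [hdiag hb, mul_zero]
        · intro h; exact absurd (Finset.mem_univ a) h
      rw [hinner]; ring
    have gap2 : ∀ j, ∑ a, (V j a) ^ 2 * f (N a a) ≤ f (lam j) := by
      intro j
      rw [lamentry j]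
      exact jensenA f hconc.concaveOn (fun a => (V j a) ^ 2) (fun a => N a a)
        (fun a => sq_nonneg _) (rowsum j) hNnn
    calc ∑ i, f (N i i) = ∑ j, ∑ a, (V j a) ^ 2 * f (N a a) := by
          rw [Finset.sum_comm]
          apply Finset.sum_congr rfl
          intro a _
          rw [← Finset.sum_mul, colsum a, one_mul]
      _ ≤ ∑ j, f (lam j) := Finset.sum_le_sum fun j _ => gap2 j
end

section
/- Let f : [0,∞) → ℝ be non-decreasing, concave with f(0) = 0, and F(M) = ∑_{i=1}^p f(λ_i(M)) for p×p PSD matrices. Let M be a d×d positive semidefinite matrix and Q ∈ ℝ^{d×p} with orthonormal columns (p ≤ d) such that the column space (image) of M is contained in the image of Q. Then ∑_{i=1}^d f(λ_i(M)) ≤ ∑_{i=1}^p f((Qᵀ M Q)_{ii}). -/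
/-!
Diagonalize `M = U diag(λ) Uᵀ` and put `C = Qᵀ U`. Then `(Qᵀ M Q)ᵢᵢ = ∑ⱼ Cᵢⱼ² λⱼ`, every row of
`(Cᵢⱼ²)` sums to `1` because `C Cᵀ = Qᵀ Q = 1`, and every column `j` with `λⱼ ≠ 0` sums to `1`
because `Q Qᵀ` fixes `image M`, which contains the eigenvector `uⱼ`. Writing
`f λⱼ = ∑ᵢ Cᵢⱼ² f λⱼ` (trivially when `λⱼ = 0`, as `f 0 = 0`) and applying Jensen's inequality to
each row gives the claim.
-/

open Matrix BigOperators

theorem ConcaveOn.sum_map_le_sum_map_mix {ι κ : Type*} [Fintype ι] [Fintype κ] {f : ℝ → ℝ}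
    (hf : ConcaveOn ℝ (Set.Ici 0) f) (hf0 : f 0 = 0) {w : κ → ι → ℝ} {x : ι → ℝ}
    (hx : ∀ j, 0 ≤ x j) (hw : ∀ i j, 0 ≤ w i j) (hrow : ∀ i, ∑ j, w i j = 1)
    (hcol : ∀ j, x j ≠ 0 → ∑ i, w i j = 1) :
    ∑ j, f (x j) ≤ ∑ i, f (∑ j, w i j * x j) :=
  calc ∑ j, f (x j) = ∑ j, ∑ i, w i j * f (x j) := by
        refine Finset.sum_congr rfl fun j _ => ?_
        rw [← Finset.sum_mul]
        by_cases hj : x j = 0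
        · rw [hj, hf0, mul_zero]
        · rw [hcol j hj, one_mul]
    _ = ∑ i, ∑ j, w i j • f (x j) := Finset.sum_comm
    _ ≤ ∑ i, f (∑ j, w i j • x j) := Finset.sum_le_sum fun i _ =>
        hf.le_map_sum (fun j _ => hw i j) (hrow i) fun j _ => hx j

namespace Matrix

variable {R m n k : Type*} [CommRing R]

theorem mul_transpose_apply_self [Fintype n] (A : Matrix m n R) (i : m) :
    (A * Aᵀ) i i = ∑ j, A i j ^ 2 := by
  simp only [mul_apply, transpose_apply, sq]

theorem transpose_mul_apply_self [Fintype m] (A : Matrix m n R) (j : n) :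
    (Aᵀ * A) j j = ∑ i, A i j ^ 2 := by
  simpa using mul_transpose_apply_self Aᵀ j

theorem mul_diagonal_mul_transpose_apply_self [Fintype n] [DecidableEq n] (A : Matrix m n R)
    (x : n → R) (i : m) : (A * diagonal x * Aᵀ) i i = ∑ j, A i j ^ 2 * x j := by
  rw [mul_apply]
  simp only [mul_diagonal, transpose_apply]
  exact Finset.sum_congr rfl fun j _ => by ring

theorem mul_transpose_mul_of_range_le [Fintype m] [Fintype n] [Fintype k] [DecidableEq k]
    {Q : Matrix m k R} {M : Matrix m n R}
    (hQ : Qᵀ * Q = 1) (hrange : LinearMap.range M.mulVecLin ≤ LinearMap.range Q.mulVecLin) :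
    Q * Qᵀ * M = M := by
  refine ext_iff_mulVec.mpr fun v => ?_
  obtain ⟨x, hx⟩ := hrange (LinearMap.mem_range_self M.mulVecLin v)
  change Q *ᵥ x = M *ᵥ v at hx
  rw [← mulVec_mulVec, ← hx, mulVec_mulVec, Matrix.mul_assoc, hQ, Matrix.mul_one]

theorem IsHermitian.eq_eigenvectorUnitary_mul_diagonal_mul_transpose [Fintype n] [DecidableEq n]
    {M : Matrix n n ℝ} (hM : M.IsHermitian) :
    M = (hM.eigenvectorUnitary : Matrix n n ℝ) * diagonal hM.eigenvalues *
      (hM.eigenvectorUnitary : Matrix n n ℝ)ᵀ := by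
  simpa [star_eq_conjTranspose] using hM.spectral_theorem

theorem sum_sq_transpose_mul_apply_eq_one_of_range_le [IsDomain R] [Fintype m] [DecidableEq m]
    [Fintype k] [DecidableEq k]
    {Q : Matrix m k R} {M U : Matrix m m R} {x : m → R} (hQ : Qᵀ * Q = 1)
    (hrange : LinearMap.range M.mulVecLin ≤ LinearMap.range Q.mulVecLin) (hU : Uᵀ * U = 1)
    (hM : M = U * diagonal x * Uᵀ) {j : m} (hj : x j ≠ 0) :
    ∑ i, (Qᵀ * U) i j ^ 2 = 1 := by
  have hproj : (Qᵀ * U)ᵀ * (Qᵀ * U) * diagonal x = diagonal x :=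
    calc (Qᵀ * U)ᵀ * (Qᵀ * U) * diagonal x
        = Uᵀ * (Q * Qᵀ * (U * diagonal x * Uᵀ)) * U := by
          simp only [transpose_mul, transpose_transpose, Matrix.mul_assoc, hU, Matrix.mul_one]
      _ = diagonal x := by
          rw [← hM, mul_transpose_mul_of_range_le hQ hrange, hM]
          simp only [Matrix.mul_assoc, hU, Matrix.mul_one, ← Matrix.mul_assoc Uᵀ, Matrix.one_mul]
  have hjj := congrFun (congrFun hproj j) j
  rw [mul_diagonal, diagonal_apply_eq, transpose_mul_apply_self] at hjj
  exact mul_left_cancel₀ hj (by rw [mul_one, mul_comm, hjj])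

end Matrix

theorem stmt3_general {d p : ℕ} (f : ℝ → ℝ)
    (hconc : ConcaveOn ℝ (Set.Ici 0) f)
    (hf0 : f 0 = 0)
    (M : Matrix (Fin d) (Fin d) ℝ) (hM : M.PosSemidef)
    (Q : Matrix (Fin d) (Fin p) ℝ) (hQ : Qᵀ * Q = 1)
    (hrange : LinearMap.range M.mulVecLin ≤ LinearMap.range Q.mulVecLin) :
    ∑ i, f (hM.1.eigenvalues i) ≤ ∑ i : Fin p, f ((Qᵀ * M * Q) i i) := by
  set U : Matrix (Fin d) (Fin d) ℝ := ↑hM.1.eigenvectorUnitary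
  have hspec : M = U * diagonal hM.1.eigenvalues * Uᵀ :=
    hM.1.eq_eigenvectorUnitary_mul_diagonal_mul_transpose
  have hUtU : Uᵀ * U = 1 := by
    simpa [star_eq_conjTranspose] using Unitary.coe_star_mul_self hM.1.eigenvectorUnitary
  have hUUt : U * Uᵀ = 1 := by
    simpa [star_eq_conjTranspose] using Unitary.coe_mul_star_self hM.1.eigenvectorUnitary
  have hdiag : ∀ i, (Qᵀ * M * Q) i i = ∑ j, (Qᵀ * U) i j ^ 2 * hM.1.eigenvalues j := by
    intro i
    conv_lhs => rw [hspec]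
    rw [← mul_diagonal_mul_transpose_apply_self]
    simp only [transpose_mul, transpose_transpose, Matrix.mul_assoc]
  have hrow : ∀ i, ∑ j, (Qᵀ * U) i j ^ 2 = 1 := fun i => by
    rw [← mul_transpose_apply_self, transpose_mul, transpose_transpose, Matrix.mul_assoc,
      ← Matrix.mul_assoc U, hUUt, Matrix.one_mul, hQ, one_apply_eq]
  simp_rw [hdiag]
  exact hconc.sum_map_le_sum_map_mix hf0 hM.eigenvalues_nonneg (fun _ _ => sq_nonneg _) hrow
    fun j hj => sum_sq_transpose_mul_apply_eq_one_of_range_le hQ hrange hUtU hspec hj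

theorem stmt3 {d p : ℕ} (hp : p ≤ d) (f : ℝ → ℝ)
    (hmono : MonotoneOn f (Set.Ici 0)) (hconc : ConcaveOn ℝ (Set.Ici 0) f)
    (hf0 : f 0 = 0)
    (M : Matrix (Fin d) (Fin d) ℝ) (hM : M.PosSemidef)
    (Q : Matrix (Fin d) (Fin p) ℝ) (hQ : Qᵀ * Q = 1)
    (hrange : LinearMap.range M.mulVecLin ≤ LinearMap.range Q.mulVecLin) :
    ∑ i, f (hM.1.eigenvalues i) ≤ ∑ i : Fin p, f ((Qᵀ * M * Q) i i) :=
  stmt3_general f hconc hf0 M hM Q hQ hrange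
end

section
/- For c > 0 and M ∈ PSD(d), and for every orthogonal Q ∈ O(d), log det(I + c M) ≤ ∑_{i=1}^d log(1 + c (Qᵀ M Q)_{ii}), with equality if and only if Qᵀ M Q is diagonal. -/
/-!
Conjugating by `Q` changes neither the determinant nor positive definiteness, so the claim is
Hadamard's inequality `log det A ≤ ∑ i, log (A i i)` for the positive definite matrix
`A = 1 + c • Qᵀ M Q`, whose off-diagonal part vanishes exactly when that of `Qᵀ M Q` does.
Hadamard's inequality with its equality case follows by normalising `A` to its correlation
matrix `C` (unit diagonal) and applying `log λ ≤ λ - 1` to the eigenvalues of `C`: this gives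
`log det C ≤ tr C - d = 0`, with equality iff every eigenvalue is `1`, i.e. `C = 1`.
-/

open Matrix

namespace Matrix

variable {n : Type*}

theorem PosDef.sqrt_diag_ne_zero {A : Matrix n n ℝ} (hA : A.PosDef) (i : n) : √(A i i) ≠ 0 :=
  (Real.sqrt_pos.2 hA.diag_pos).ne'

variable [DecidableEq n]

theorem isDiag_one_add_smul_iff {K : Type*} [Field K] {c : K} (hc : c ≠ 0) {N : Matrix n n K} :
    (1 + c • N).IsDiag ↔ N.IsDiag := by
  refine ⟨fun h => ?_, fun h => isDiag_one.add (h.smul c)⟩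
  simpa [hc] using (h.sub isDiag_one).smul c⁻¹

variable [Fintype n]

theorem det_transpose_mul_mul_of_transpose_mul_self_eq_one {R : Type*} [CommRing R]
    {Q : Matrix n n R} (hQ : Qᵀ * Q = 1) (X : Matrix n n R) : (Qᵀ * X * Q).det = X.det := by
  rw [det_mul, det_mul, mul_right_comm, ← det_mul, hQ, det_one, one_mul]

theorem IsHermitian.eq_one_of_eigenvalues_eq_one {A : Matrix n n ℝ} (hA : A.IsHermitian)
    (h : ∀ i, hA.eigenvalues i = 1) : A = 1 := by
  rw [hA.spectral_theorem]
  simp [show hA.eigenvalues = fun _ => 1 from funext h]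

theorem PosDef.trace_sub_card_sub_log_det {A : Matrix n n ℝ} (hA : A.PosDef) :
    A.trace - Fintype.card n - Real.log A.det =
      ∑ i, (hA.1.eigenvalues i - 1 - Real.log (hA.1.eigenvalues i)) := by
  rw [hA.1.trace_eq_sum_eigenvalues, hA.1.det_eq_prod_eigenvalues]
  simp [Finset.sum_sub_distrib, Real.log_prod fun i _ => (hA.eigenvalues_pos i).ne']

theorem PosDef.log_det_le_trace_sub_card {A : Matrix n n ℝ} (hA : A.PosDef) :
    Real.log A.det ≤ A.trace - Fintype.card n := by
  have hterm_nonneg : 0 ≤ ∑ i, (hA.1.eigenvalues i - 1 - Real.log (hA.1.eigenvalues i)) :=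
    Finset.sum_nonneg fun i _ => sub_nonneg.2 (Real.log_le_sub_one_of_pos (hA.eigenvalues_pos i))
  linarith [hA.trace_sub_card_sub_log_det]

theorem PosDef.log_det_eq_trace_sub_card_iff {A : Matrix n n ℝ} (hA : A.PosDef) :
    Real.log A.det = A.trace - Fintype.card n ↔ A = 1 := by
  refine ⟨fun h => hA.1.eq_one_of_eigenvalues_eq_one fun i => ?_, fun h => by simp [h]⟩
  have hterm_eq_zero := hA.trace_sub_card_sub_log_det
  rw [← h, sub_self, eq_comm, Finset.sum_eq_zero_iff_of_nonneg fun i _ =>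
    sub_nonneg.2 (Real.log_le_sub_one_of_pos (hA.eigenvalues_pos i))] at hterm_eq_zero
  by_contra hi
  exact (Real.log_lt_sub_one_of_pos (hA.eigenvalues_pos i) hi).ne
    (by linarith [hterm_eq_zero i (Finset.mem_univ i)])

noncomputable def correlation (A : Matrix n n ℝ) : Matrix n n ℝ :=
  diagonal (fun i => (√(A i i))⁻¹) * A * diagonal (fun i => (√(A i i))⁻¹)

theorem correlation_apply (A : Matrix n n ℝ) (i j : n) :
    A.correlation i j = (√(A i i))⁻¹ * A i j * (√(A j j))⁻¹ := by
  simp [correlation, diagonal_mul, mul_diagonal]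

theorem PosDef.correlation {A : Matrix n n ℝ} (hA : A.PosDef) : A.correlation.PosDef := by
  have hD : IsUnit (diagonal (fun i => (√(A i i))⁻¹)) := by
    rw [isUnit_iff_isUnit_det, det_diagonal, isUnit_iff_ne_zero]
    exact Finset.prod_ne_zero_iff.2 fun i _ => inv_ne_zero (hA.sqrt_diag_ne_zero i)
  simpa [Matrix.correlation, diagonal_conjTranspose] using
    hA.conjTranspose_mul_mul_same (mulVec_injective_of_isUnit hD)

theorem PosDef.correlation_apply_self {A : Matrix n n ℝ} (hA : A.PosDef) (i : n) :
    A.correlation i i = 1 := by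
  have := hA.sqrt_diag_ne_zero i
  rw [correlation_apply]
  field_simp
  exact (Real.sq_sqrt hA.diag_pos.le).symm

theorem PosDef.trace_correlation {A : Matrix n n ℝ} (hA : A.PosDef) :
    A.correlation.trace = Fintype.card n := by
  simp [trace, hA.correlation_apply_self]

theorem PosDef.log_det_correlation {A : Matrix n n ℝ} (hA : A.PosDef) :
    Real.log A.correlation.det = Real.log A.det - ∑ i, Real.log (A i i) := by
  have hprod : (∏ i, (√(A i i))⁻¹) * ∏ i, (√(A i i))⁻¹ = (∏ i, A i i)⁻¹ := by
    rw [← Finset.prod_mul_distrib, ← Finset.prod_inv_distrib]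
    exact Finset.prod_congr rfl fun i _ => by rw [← mul_inv, Real.mul_self_sqrt hA.diag_pos.le]
  have hdet : A.correlation.det = A.det * (∏ i, A i i)⁻¹ := by
    rw [Matrix.correlation, det_mul, det_mul, det_diagonal, ← hprod]
    ring
  rw [hdet, Real.log_mul hA.det_pos.ne' (inv_ne_zero (Finset.prod_pos fun i _ => hA.diag_pos).ne'),
    Real.log_inv, Real.log_prod fun i _ => hA.diag_pos.ne', sub_eq_add_neg]

theorem PosDef.correlation_eq_one_iff {A : Matrix n n ℝ} (hA : A.PosDef) :
    A.correlation = 1 ↔ A.IsDiag := by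
  constructor
  · intro h i j hij
    have := congrFun₂ h i j
    rw [correlation_apply, one_apply_ne hij] at this
    simpa [hA.sqrt_diag_ne_zero] using this
  · intro h
    ext i j
    rcases eq_or_ne i j with rfl | hij
    · simp [hA.correlation_apply_self]
    · rw [correlation_apply, h hij, one_apply_ne hij]
      simp

theorem PosDef.log_det_le_sum_log_diag {A : Matrix n n ℝ} (hA : A.PosDef) :
    Real.log A.det ≤ ∑ i, Real.log (A i i) := by
  have := hA.correlation.log_det_le_trace_sub_card
  rw [hA.trace_correlation, sub_self, hA.log_det_correlation] at this
  linarith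

theorem PosDef.log_det_eq_sum_log_diag_iff {A : Matrix n n ℝ} (hA : A.PosDef) :
    Real.log A.det = ∑ i, Real.log (A i i) ↔ A.IsDiag := by
  rw [← hA.correlation_eq_one_iff, ← hA.correlation.log_det_eq_trace_sub_card_iff,
    hA.trace_correlation, sub_self, hA.log_det_correlation, sub_eq_zero]

end Matrix

theorem stmt9 {d : ℕ} (c : ℝ) (hc : 0 < c)
    (M : Matrix (Fin d) (Fin d) ℝ) (hM : M.PosSemidef)
    (Q : Matrix (Fin d) (Fin d) ℝ) (hQ : Qᵀ * Q = 1) :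
    Real.log (1 + c • M).det ≤ ∑ i, Real.log (1 + c * (Qᵀ * M * Q) i i) ∧
    (Real.log (1 + c • M).det = ∑ i, Real.log (1 + c * (Qᵀ * M * Q) i i) ↔
      (Qᵀ * M * Q).IsDiag) := by
  set N := Qᵀ * M * Q
  have hN : N.PosSemidef := by
    simpa [conjTranspose_eq_transpose_of_trivial] using hM.conjTranspose_mul_mul_same Q
  have hA : (1 + c • N).PosDef := PosDef.one.add_posSemidef (hN.smul hc.le)
  have hdet : (1 + c • M).det = (1 + c • N).det := by
    rw [← det_transpose_mul_mul_of_transpose_mul_self_eq_one hQ]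
    simp [N, Matrix.mul_add, Matrix.add_mul, hQ, Matrix.mul_assoc]
  have hdiag : ∀ i, (1 + c • N) i i = 1 + c * N i i := fun i => by simp
  simp only [hdet, ← hdiag]
  exact ⟨hA.log_det_le_sum_log_diag,
    hA.log_det_eq_sum_log_diag_iff.trans (isDiag_one_add_smul_iff hc.ne')⟩
end

section
/- With the notation of the variational compression bound, if additionally each U_k diagonalizes Z Diag(π_k) Zᵀ (i.e., U_kᵀ Z Diag(π_k) Zᵀ U_k is diagonal and image(Z Diag(π_k) Zᵀ) ⊆ image(U_k)), then R_{c,f}(Z,Π) = R^var_{c,f}(Z,Π | {U_k}). -/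
open Matrix BigOperators Polynomial

lemma eval_charpoly' {m : ℕ} (M : Matrix (Fin m) (Fin m) ℝ) (x : ℝ) :
    (M.charpoly).eval x = (x • (1 : Matrix (Fin m) (Fin m) ℝ) - M).det := by
  rw [Matrix.charpoly, show (Polynomial.eval x : ℝ[X] → ℝ) = (Polynomial.evalRingHom x : ℝ[X] →+* ℝ) from rfl,
    RingHom.map_det]
  congr 1
  ext i j
  by_cases h : i = j
  · subst h
    simp [Matrix.charmatrix_apply_eq, Matrix.one_apply_eq]
  · simp [Matrix.charmatrix_apply_ne _ _ _ h, Matrix.one_apply_ne h]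

lemma charpoly_mul_comm_rect {a b : ℕ} (A : Matrix (Fin a) (Fin b) ℝ)
    (B : Matrix (Fin b) (Fin a) ℝ) :
    X ^ b * (A * B).charpoly = X ^ a * (B * A).charpoly := by
  apply Polynomial.eq_of_infinite_eval_eq
  apply Set.Infinite.mono (s := {x : ℝ | x ≠ 0})
  · intro x hx
    have hx : x ≠ 0 := hx
    simp only [Set.mem_setOf_eq, eval_mul, eval_pow, eval_X, eval_charpoly']
    have key : ∀ {m : ℕ} (M : Matrix (Fin m) (Fin m) ℝ),
        x • (1 : Matrix (Fin m) (Fin m) ℝ) - M = x • (1 + (-x⁻¹) • M) := by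
      intro m M
      rw [smul_add, smul_smul, mul_neg, mul_inv_cancel₀ hx, neg_one_smul, ← sub_eq_add_neg]
    rw [key (A * B), key (B * A), Matrix.det_smul, Matrix.det_smul,
      show (-x⁻¹) • (A * B) = ((-x⁻¹) • A) * B from (Matrix.smul_mul _ _ _).symm,
      Matrix.det_one_add_mul_comm,
      show B * ((-x⁻¹) • A) = (-x⁻¹) • (B * A) from Matrix.mul_smul _ _ _]
    simp only [Fintype.card_fin]
    ring
  · have h : ({x : ℝ | x ≠ 0}) = ({0} : Set ℝ)ᶜ := by ext y; simp
    rw [h]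
    exact (Set.finite_singleton 0).infinite_compl

lemma charpoly_diagonal' {m : ℕ} (v : Fin m → ℝ) :
    (Matrix.diagonal v).charpoly = ∏ i, (X - C (v i)) := by
  rw [Matrix.charpoly]
  have h : Matrix.charmatrix (Matrix.diagonal v)
      = Matrix.diagonal (fun i => (X : ℝ[X]) - C (v i)) := by
    ext i j
    by_cases h : i = j
    · subst h
      simp [Matrix.charmatrix_apply_eq]
    · simp [Matrix.charmatrix_apply_ne _ _ _ h, Matrix.diagonal_apply_ne _ h]
  rw [h, Matrix.det_diagonal]

lemma charpoly_hermitian' {m : ℕ} {M : Matrix (Fin m) (Fin m) ℝ} (hM : M.IsHermitian) :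
    M.charpoly = ∏ i, (X - C (hM.eigenvalues i)) := by
  have hd : Matrix.diagonal ((RCLike.ofReal : ℝ → ℝ) ∘ hM.eigenvalues)
      = Matrix.diagonal hM.eigenvalues := by
    congr 1
  have hs : M = (hM.eigenvectorUnitary : Matrix (Fin m) (Fin m) ℝ) *
      (Matrix.diagonal hM.eigenvalues * star (hM.eigenvectorUnitary : Matrix (Fin m) (Fin m) ℝ)) := by
    rw [← Matrix.mul_assoc, ← hd]
    exact hM.spectral_theorem
  have h1 := charpoly_mul_comm_rect (hM.eigenvectorUnitary : Matrix (Fin m) (Fin m) ℝ)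
      (Matrix.diagonal hM.eigenvalues * star (hM.eigenvectorUnitary : Matrix (Fin m) (Fin m) ℝ))
  rw [← hs, Matrix.mul_assoc, Unitary.coe_star_mul_self, Matrix.mul_one] at h1
  have h2 := mul_left_cancel₀ (pow_ne_zero m (Polynomial.X_ne_zero (R := ℝ))) h1
  rw [h2, charpoly_diagonal']

lemma sum_f_eigenvalues {dd pp : ℕ} (f : ℝ → ℝ) (hf0 : f 0 = 0)
    {M : Matrix (Fin dd) (Fin dd) ℝ} (hM : M.IsHermitian)
    (U : Matrix (Fin dd) (Fin pp) ℝ) (dg : Fin pp → ℝ)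
    (hUU : Uᵀ * U = 1)
    (hM2 : M = U * Matrix.diagonal dg * Uᵀ) :
    ∑ i, f (hM.eigenvalues i) = ∑ i, f (dg i) := by
  have h1 : X ^ pp * M.charpoly = X ^ dd * (Matrix.diagonal dg).charpoly := by
    have h := charpoly_mul_comm_rect U (Matrix.diagonal dg * Uᵀ)
    rw [← Matrix.mul_assoc, ← hM2, Matrix.mul_assoc (Matrix.diagonal dg), hUU,
      Matrix.mul_one] at h
    exact h
  have hMc : M.charpoly
      = ((Finset.univ.val.map hM.eigenvalues).map (fun a => (X : ℝ[X]) - C a)).prod := by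
    rw [charpoly_hermitian' hM, Finset.prod_eq_multiset_prod, Multiset.map_map]
    rfl
  have hDc : (Matrix.diagonal dg).charpoly
      = ((Finset.univ.val.map dg).map (fun a => (X : ℝ[X]) - C a)).prod := by
    rw [charpoly_diagonal', Finset.prod_eq_multiset_prod, Multiset.map_map]
    rfl
  have hroots : Multiset.replicate pp (0 : ℝ) + Finset.univ.val.map hM.eigenvalues
      = Multiset.replicate dd (0 : ℝ) + Finset.univ.val.map dg := by
    have h := congrArg Polynomial.roots h1
    rw [Polynomial.roots_mul (mul_ne_zero (pow_ne_zero _ Polynomial.X_ne_zero)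
        (Matrix.charpoly_monic M).ne_zero),
      Polynomial.roots_mul (mul_ne_zero (pow_ne_zero _ Polynomial.X_ne_zero)
        (Matrix.charpoly_monic (Matrix.diagonal dg)).ne_zero),
      Polynomial.roots_pow, Polynomial.roots_pow, Polynomial.roots_X, hMc, hDc,
      Polynomial.roots_multiset_prod_X_sub_C, Polynomial.roots_multiset_prod_X_sub_C] at h
    simpa [Multiset.nsmul_singleton] using h
  have h := congrArg (fun s : Multiset ℝ => (s.map f).sum) hroots
  simp only [Multiset.map_add, Multiset.sum_add, Multiset.map_replicate, hf0,
    Multiset.sum_replicate, smul_zero, zero_add, Multiset.map_map] at h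
  rw [Finset.sum_eq_multiset_sum, Finset.sum_eq_multiset_sum]
  exact h


lemma decomp_lemma {dd pp : ℕ} (S : Matrix (Fin dd) (Fin dd) ℝ) (U : Matrix (Fin dd) (Fin pp) ℝ)
    (c : ℝ) (hSsym : Sᵀ = S) (hUU : Uᵀ * U = 1)
    (hr : LinearMap.range S.mulVecLin ≤ LinearMap.range U.mulVecLin)
    (hd : (Uᵀ * S * U).IsDiag) :
    c • S = U * Matrix.diagonal (fun i => c * (Uᵀ * S * U) i i) * Uᵀ := by
  have hcol : ∀ v, (U * (Uᵀ * S)) *ᵥ v = S *ᵥ v := by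
    intro v
    obtain ⟨y, hy⟩ := hr (LinearMap.mem_range_self S.mulVecLin v)
    simp only [Matrix.mulVecLin_apply] at hy
    rw [← Matrix.mulVec_mulVec, ← Matrix.mulVec_mulVec, ← hy,
      Matrix.mulVec_mulVec y Uᵀ U, hUU, Matrix.one_mulVec]
  have hproj : U * Uᵀ * S = S := by
    ext i j
    have h := congrFun (hcol (Pi.single j 1)) i
    simpa [Matrix.mul_assoc] using h
  have hproj' : S * U * Uᵀ = S := by
    have h := congrArg Matrix.transpose hproj
    rw [Matrix.transpose_mul, Matrix.transpose_mul, Matrix.transpose_transpose, hSsym] at h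
    rw [Matrix.mul_assoc]
    exact h
  have hdg : Matrix.diagonal (fun i => c * (Uᵀ * S * U) i i)
      = c • (Uᵀ * S * U) := by
    have h := hd.diagonal_diag
    calc Matrix.diagonal (fun i => c * (Uᵀ * S * U) i i)
        = Matrix.diagonal (c • Matrix.diag (Uᵀ * S * U)) := rfl
      _ = c • Matrix.diagonal (Matrix.diag (Uᵀ * S * U)) := Matrix.diagonal_smul _ _
      _ = c • (Uᵀ * S * U) := by rw [h]
  rw [hdg, Matrix.mul_smul, Matrix.smul_mul]
  congr 1
  calc S = U * Uᵀ * S := hproj.symm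
    _ = U * Uᵀ * (S * U * Uᵀ) := by rw [hproj']
    _ = U * (Uᵀ * S * U) * Uᵀ := by simp only [Matrix.mul_assoc]

theorem stmt17 {d n p K : ℕ} (hn : 0 < n)
    (f : ℝ → ℝ) (hmono : MonotoneOn f (Set.Ici 0))
    (hconc : ConcaveOn ℝ (Set.Ici 0) f) (hf0 : f 0 = 0)
    (Z : Matrix (Fin d) (Fin n) ℝ) (P : Matrix (Fin n) (Fin K) ℝ)
    (hPnn : ∀ j k, 0 ≤ P j k) (hProw : ∀ j, ∑ k, P j k = 1)
    (hnk : ∀ k, 0 < ∑ j, P j k)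
    (U : Fin K → Matrix (Fin d) (Fin p) ℝ) (hU : ∀ k, (U k)ᵀ * U k = 1)
    (hrange : ∀ k,
      LinearMap.range (Z * Matrix.diagonal (fun j => P j k) * Zᵀ).mulVecLin ≤
        LinearMap.range (U k).mulVecLin)
    (hdiag : ∀ k,
      ((U k)ᵀ * (Z * Matrix.diagonal (fun j => P j k) * Zᵀ) * U k).IsDiag)
    (hH : ∀ k,
      ((∑ j, P j k)⁻¹ • (Z * Matrix.diagonal (fun j => P j k) * Zᵀ)).IsHermitian) :
    (1 / 2) * ∑ k, ((∑ j, P j k) / n) * ∑ i, f ((hH k).eigenvalues i) =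
      (1 / 2) * ∑ k, ((∑ j, P j k) / n) * ∑ i : Fin p,
        f ((∑ j, P j k)⁻¹ *
          ((U k)ᵀ * (Z * Matrix.diagonal (fun j => P j k) * Zᵀ) * U k) i i) := by
  congr 1
  apply Finset.sum_congr rfl
  intro k _
  congr 1
  have hnk0 : (∑ j, P j k) ≠ 0 := (hnk k).ne'
  have hSsym : (Z * Matrix.diagonal (fun j => P j k) * Zᵀ)ᵀ
      = Z * Matrix.diagonal (fun j => P j k) * Zᵀ := by
    have h := hH k
    rw [Matrix.IsHermitian, Matrix.conjTranspose_eq_transpose_of_trivial,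
      Matrix.transpose_smul] at h
    exact smul_right_injective _ (inv_ne_zero hnk0) h
  exact sum_f_eigenvalues f hf0 (hH k) (U k) _ (hU k)
    (decomp_lemma _ (U k) _ hSsym (hU k) (hrange k) (hdiag k))
end
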